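/- Let k be even and let r, q, p ≥ 1 be integers with r + q + p = k and k ≥ 4. Then T(r,q,p) lies in the Q-vector subspace of ℝ spanned by the double zeta values ζ(j, k-j) for 2 ≤ j ≤ r together with ζ(k) and the products ζ(j)·ζ(k-j) for 2 ≤ j ≤ k-2. -/

import Mathlib

/-- Riemann zeta value ζ(j) = ∑_{m≥1} 1/m^j. -/
noncomputable def rz (j : ℕ) : ℝ := ∑' n : ℕ, 1 / ((n : ℝ) + 1) ^ j

/-- Double zeta value ζ(q,p) = ∑_{n>m>0} 1/(n^q m^p). -/
noncomputable def dz (q p : ℕ) : ℝ :=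
  ∑' x : ℕ × ℕ, 1 / (((x.1 : ℝ) + (x.2 : ℝ) + 2) ^ q * ((x.2 : ℝ) + 1) ^ p)

/-- Tornheim double series T(r,q,p) = ∑_{n,m>0} 1/((n+m)^r n^q m^p). -/
noncomputable def T (r q p : ℕ) : ℝ :=
  ∑' x : ℕ × ℕ,
    1 / (((x.1 : ℝ) + (x.2 : ℝ) + 2) ^ r * ((x.1 : ℝ) + 1) ^ q * ((x.2 : ℝ) + 1) ^ p)

/-!
Writing `1 / (n m) = 1 / ((n + m) m) + 1 / ((n + m) n)` gives
`T(c, a + 1, b + 1) = T(c + 1, a, b + 1) + T(c + 1, a + 1, b)`. Read backwards, it lowers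
`r + q` at fixed weight until one reaches `T(0, a, b) = ζ(a) ζ(b)`, `T(c, 0, b) = ζ(c, b)` with
`c ≤ r`, or `T(1, 1, k - 2)`. Telescoping the inner sum `∑ₙ 1 / (n (n + m)) = H_m / m` gives
`T(1, 1, p) = ζ⋆(p + 1, 1) = ζ(p + 1, 1) + ζ(p + 2)`, while iterating the identity from
`T(k - 2, 1, 1)` gives `T(1, 1, k - 2) = 2 ζ(k - 1, 1) + ∑_{j=2}^{k-2} ζ(j, k - j)`. By the stuffle
relation `ζ(a) ζ(b) = ζ(a, b) + ζ(b, a) + ζ(a + b)` that symmetric sum, hence `ζ(k - 1, 1)`, lies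
in the span.
-/

open Finset Filter Topology

section Rearrangement

variable {E : Type*} [NormedAddCommGroup E] [CompleteSpace E]

theorem tsum_eq_tsum_comp_add_tsum_comp {β γ δ : Type*} {f : β → E} (hf : Summable f)
    {g : γ → β} {h : δ → β} (hg : g.Injective) (hh : h.Injective)
    (hgh : (Set.range g)ᶜ = Set.range h) :
    ∑' x, f x = ∑' c, f (g c) + ∑' d, f (h d) := by
  have hsplit (x : β) : f x = (Set.range g).indicator f x + (Set.range h).indicator f x := by
    rw [← hgh, Set.indicator_self_add_compl_apply]
  rw [tsum_congr hsplit, (hf.indicator _).tsum_add (hf.indicator _), ← _root_.tsum_subtype,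
    ← _root_.tsum_subtype, tsum_range f hg, tsum_range f hh]

theorem tsum_prod_eq_tsum_sum_range {f : ℕ → ℕ → E}
    (hf : Summable fun x : ℕ × ℕ => f (x.1 + x.2) x.2) :
    ∑' x : ℕ × ℕ, f (x.1 + x.2) x.2 = ∑' n, ∑ i ∈ range (n + 1), f n i := by
  rw [← HasAntidiagonal.sigmaAntidiagonalEquivProd.tsum_eq]
  refine (HasAntidiagonal.sigmaAntidiagonalEquivProd.summable_iff.2 hf).tsum_sigma.trans
    (tsum_congr fun n => ?_)
  refine (Finset.tsum_subtype (antidiagonal n) fun x => f (x.1 + x.2) x.2).trans ?_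
  rw [← Nat.sum_antidiagonal_swap, Nat.sum_antidiagonal_eq_sum_range_succ_mk]
  exact sum_congr rfl fun i hi => by
    simp only [Prod.swap_prod_mk, Nat.sub_add_cancel (mem_range_succ_iff.1 hi)]

end Rearrangement

theorem hasSum_sub_add_of_antitone {f : ℕ → ℝ} (hf : Antitone f)
    (hlim : Tendsto f atTop (𝓝 0)) (d : ℕ) :
    HasSum (fun n => f n - f (n + d)) (∑ i ∈ range d, f i) := by
  refine (hasSum_iff_tendsto_nat_of_nonneg
    (fun n => sub_nonneg.2 (hf (Nat.le_add_right n d))) _).2 ?_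
  have hpartial (N : ℕ) : ∑ n ∈ range N, (f n - f (n + d))
      = ∑ i ∈ range d, f i - ∑ i ∈ range d, f (N + i) := by
    have h₁ := sum_range_add f d N
    have h₂ := sum_range_add f N d
    simp only [add_comm d] at h₁
    rw [sum_sub_distrib]
    linarith
  have htail : Tendsto (fun N => ∑ i ∈ range d, f (N + i)) atTop (𝓝 0) := by
    simpa using tendsto_finsetSum (range d) fun i _ => hlim.comp (tendsto_add_atTop_nat i)
  simpa [hpartial] using (tendsto_const_nhds (x := ∑ i ∈ range d, f i)).sub htail

theorem Real.rpow_mul_rpow_le_add_rpow {x y α β : ℝ} (hx : 0 ≤ x) (hy : 0 ≤ y)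
    (hα : 0 ≤ α) (hβ : 0 ≤ β) : x ^ α * y ^ β ≤ (x + y) ^ (α + β) := by
  rw [Real.rpow_add_of_nonneg (by positivity) hα hβ]
  gcongr <;> linarith

theorem summable_one_div_add_one_rpow {s : ℝ} (hs : 1 < s) :
    Summable fun n : ℕ => 1 / ((n : ℝ) + 1) ^ s := by
  refine ((Real.summable_one_div_nat_add_rpow 1 s).2 hs).congr fun n => ?_
  rw [abs_of_nonneg (by positivity)]

theorem summable_one_div_add_one_pow {j : ℕ} (hj : 2 ≤ j) :
    Summable fun n : ℕ => 1 / ((n : ℝ) + 1) ^ j := by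
  simpa using summable_one_div_add_one_rpow (s := j) (by exact_mod_cast hj)

namespace Tornheim

noncomputable def term (r q p : ℕ) (x : ℕ × ℕ) : ℝ :=
  1 / (((x.1 : ℝ) + x.2 + 2) ^ r * ((x.1 : ℝ) + 1) ^ q * ((x.2 : ℝ) + 1) ^ p)

theorem T_def (r q p : ℕ) : T r q p = ∑' x, term r q p x := rfl

theorem term_nonneg (r q p : ℕ) (x : ℕ × ℕ) : 0 ≤ term r q p x := by
  unfold term; positivity

theorem summable_term_of_rpow {r q p : ℕ} {α : ℝ} (hα₀ : 0 ≤ α) (hαr : α ≤ r)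
    (hq : 1 < q + α) (hp : 1 < p + (r - α)) : Summable (term r q p) := by
  refine Summable.of_nonneg_of_le (term_nonneg r q p) (fun x => ?_)
    ((summable_one_div_add_one_rpow hq).mul_of_nonneg (summable_one_div_add_one_rpow hp)
      (fun _ => by positivity) (fun _ => by positivity))
  set X : ℝ := x.1 + 1
  set Y : ℝ := x.2 + 1
  have hX : 0 < X := by positivity
  have hY : 0 < Y := by positivity
  rw [term, div_mul_div_comm, one_mul]
  refine one_div_le_one_div_of_le (by positivity) ?_
  calc X ^ ((q : ℝ) + α) * Y ^ ((p : ℝ) + (r - α))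
      = X ^ q * Y ^ p * (X ^ α * Y ^ ((r : ℝ) - α)) := by
        rw [Real.rpow_add hX, Real.rpow_add hY, Real.rpow_natCast, Real.rpow_natCast]; ring
    _ ≤ X ^ q * Y ^ p * (X + Y) ^ (α + (r - α)) := by
        gcongr
        exact Real.rpow_mul_rpow_le_add_rpow hX.le hY.le hα₀ (by linarith)
    _ = ((x.1 : ℝ) + x.2 + 2) ^ r * X ^ q * Y ^ p := by
        rw [add_sub_cancel, Real.rpow_natCast]; ring

theorem summable_term {r q p : ℕ} (hq : 2 ≤ r + q) (hp : 2 ≤ r + p) (h : 3 ≤ r + q + p) :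
    Summable (term r q p) := by
  have hq' : (2 : ℝ) ≤ r + q := by exact_mod_cast hq
  have h' : (3 : ℝ) ≤ r + q + p := by exact_mod_cast h
  obtain hq2 | rfl | rfl : 2 ≤ q ∨ q = 1 ∨ q = 0 := by omega
  · have hp' : (2 : ℝ) ≤ r + p := by exact_mod_cast hp
    have : (2 : ℝ) ≤ q := by exact_mod_cast hq2
    exact summable_term_of_rpow (α := 0) le_rfl (by positivity) (by linarith) (by linarith)
  · exact summable_term_of_rpow (α := 1 / 2) (by norm_num) (by push_cast at hq'; linarith)
      (by norm_num) (by push_cast at h'; linarith)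
  · exact summable_term_of_rpow (α := 3 / 2) (by norm_num) (by push_cast at hq'; linarith)
      (by norm_num) (by push_cast at h'; linarith)

theorem T_comm (r q p : ℕ) : T r q p = T r p q := by
  rw [T_def, T_def, ← (Equiv.prodComm ℕ ℕ).tsum_eq]
  refine tsum_congr fun x => ?_
  simp only [term, Equiv.prodComm_apply, Prod.fst_swap, Prod.snd_swap]
  ring

theorem dz_eq_T (q p : ℕ) : dz q p = T q 0 p :=
  tsum_congr fun x => by simp

theorem T_zero {a b : ℕ} (ha : 2 ≤ a) (hb : 2 ≤ b) : T 0 a b = rz a * rz b := by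
  have hpos (j : ℕ) (n : ℕ) : 0 ≤ 1 / ((n : ℝ) + 1) ^ j := by positivity
  rw [rz, rz, Summable.tsum_mul_tsum (summable_one_div_add_one_pow ha)
    (summable_one_div_add_one_pow hb) ((summable_one_div_add_one_pow ha).mul_of_nonneg
      (summable_one_div_add_one_pow hb) (hpos a) (hpos b))]
  exact tsum_congr fun x => by simp [mul_comm]

theorem T_eq_add {c a b : ℕ} (ha : 1 ≤ c + a) (hb : 1 ≤ c + b) :
    T c (a + 1) (b + 1) = T (c + 1) a (b + 1) + T (c + 1) (a + 1) b := by
  rw [T_def, T_def, T_def, ← (summable_term (by omega) (by omega) (by omega)).tsum_add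
    (summable_term (by omega) (by omega) (by omega))]
  refine tsum_congr fun x => ?_
  simp only [term]
  field_simp
  ring

/-- The non-strict double zeta value `ζ⋆(q, p) = ∑_{n ≥ m > 0} 1 / (n ^ q m ^ p)`. -/
noncomputable def dzStar (q p : ℕ) : ℝ :=
  ∑' x : ℕ × ℕ, 1 / (((x.1 : ℝ) + x.2 + 1) ^ q * ((x.2 : ℝ) + 1) ^ p)

theorem summable_dzStar {q p : ℕ} (hq : 2 ≤ q) (hp : 1 ≤ p) :
    Summable fun x : ℕ × ℕ => 1 / (((x.1 : ℝ) + x.2 + 1) ^ q * ((x.2 : ℝ) + 1) ^ p) := by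
  refine Summable.of_nonneg_of_le (fun _ => by positivity) (fun x => ?_)
    ((summable_term (r := q) (q := 0) (p := p) (by omega) (by omega) (by omega)).mul_left (2 ^ q))
  simp only [term, pow_zero, mul_one]
  rw [mul_one_div, div_le_div_iff₀ (by positivity) (by positivity), one_mul]
  calc ((x.1 : ℝ) + x.2 + 2) ^ q * ((x.2 : ℝ) + 1) ^ p
      ≤ (2 * ((x.1 : ℝ) + x.2 + 1)) ^ q * ((x.2 : ℝ) + 1) ^ p := by gcongr; linarith
    _ = 2 ^ q * (((x.1 : ℝ) + x.2 + 1) ^ q * ((x.2 : ℝ) + 1) ^ p) := by rw [mul_pow]; ring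

theorem dzStar_eq {q p : ℕ} (hq : 2 ≤ q) (hp : 1 ≤ p) : dzStar q p = rz (q + p) + dz q p := by
  have hcompl :
      (Set.range fun m : ℕ => (0, m))ᶜ = Set.range fun x : ℕ × ℕ => (x.1 + 1, x.2) := by
    ext ⟨n, m⟩
    cases n <;> simp
  rw [dzStar, tsum_eq_tsum_comp_add_tsum_comp (summable_dzStar hq hp)
    (fun _ _ h => (Prod.mk.inj h).2) (fun _ _ h => by simpa [Prod.ext_iff] using h) hcompl]
  congr 1 <;> refine tsum_congr fun x => ?_
  · simp [pow_add]
  · push_cast; ring_nf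

/-- The stuffle relation, from splitting `ℕ × ℕ` into `n ≥ m` and `n < m`. -/
theorem T_zero_eq_dzStar_add_dz {a b : ℕ} (ha : 2 ≤ a) (hb : 2 ≤ b) :
    T 0 a b = dzStar a b + dz b a := by
  have hcompl : (Set.range fun x : ℕ × ℕ => (x.1 + x.2, x.2))ᶜ =
      Set.range fun x : ℕ × ℕ => (x.2, x.1 + x.2 + 1) := by
    ext ⟨n, m⟩
    simp only [Set.mem_compl_iff, Set.mem_range, Prod.ext_iff, Prod.exists]
    constructor
    · intro h
      refine ⟨m - n - 1, n, rfl, ?_⟩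
      by_contra hmn
      exact h ⟨n - m, m, by omega, rfl⟩
    · rintro ⟨u, v, rfl, rfl⟩ ⟨u', v', h, rfl⟩
      omega
  rw [T_def, tsum_eq_tsum_comp_add_tsum_comp (summable_term (by omega) (by omega) (by omega))
    (fun _ _ h => by simp only [Prod.ext_iff] at h ⊢; omega)
    (fun _ _ h => by simp only [Prod.ext_iff] at h ⊢; omega) hcompl]
  congr 1 <;> refine tsum_congr fun x => ?_
  · simp [term]
  · simp only [term]; push_cast; ring_nf

theorem T_one_one {p : ℕ} (hp : 1 ≤ p) : T 1 1 p = dzStar (p + 1) 1 := by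
  have hinner (m : ℕ) : ∑' n, term 1 p 1 (m, n) =
      ∑ i ∈ range (m + 1), 1 / (((m : ℝ) + 1) ^ (p + 1) * ((i : ℝ) + 1)) := by
    have htel := (hasSum_sub_add_of_antitone (f := fun n : ℕ => 1 / ((n : ℝ) + 1))
      (fun i j hij => by dsimp only; gcongr) tendsto_one_div_add_atTop_nhds_zero_nat
      (m + 1)).mul_left (1 / ((m : ℝ) + 1) ^ (p + 1))
    rw [mul_sum] at htel
    convert htel.tsum_eq using 1
    · refine tsum_congr fun n => ?_
      simp only [term]
      push_cast
      field_simp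
      ring
    · refine sum_congr rfl fun i _ => ?_
      rw [div_mul_div_comm, one_mul]
  rw [T_comm, T_def, (summable_term (by omega) (by omega) (by omega)).tsum_prod,
    tsum_congr hinner, ← tsum_prod_eq_tsum_sum_range (f := fun m i =>
      1 / (((m : ℝ) + 1) ^ (p + 1) * ((i : ℝ) + 1))), dzStar]
  · simp
  · simpa using summable_dzStar (q := p + 1) (p := 1) (by omega) le_rfl

theorem T_one_succ {c : ℕ} (hc : 1 ≤ c) (b : ℕ) :
    T c 1 (b + 1) = 2 * dz (c + b + 1) 1 + ∑ i ∈ range b, dz (c + i + 1) (b - i + 1) := by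
  induction b generalizing c with
  | zero =>
    rw [T_eq_add (a := 0) (b := 0) hc hc, T_comm (c + 1) 1 0, ← dz_eq_T]
    simp only [sum_range_zero]
    ring
  | succ b ih =>
    rw [T_eq_add (a := 0) (b := b + 1) hc (by omega), ih (by omega), ← dz_eq_T, sum_range_succ']
    simp only [Nat.add_sub_add_right, Nat.sub_zero]
    ring_nf

noncomputable def zetaSpan (k r : ℕ) : Submodule ℚ ℝ :=
  Submodule.span ℚ ({x : ℝ | ∃ j, 2 ≤ j ∧ j ≤ r ∧ x = dz j (k - j)} ∪ {rz k} ∪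
    {x : ℝ | ∃ j, 2 ≤ j ∧ j ≤ k - 2 ∧ x = rz j * rz (k - j)})

section zetaSpan

variable {k r : ℕ}

theorem rz_mem_zetaSpan : rz k ∈ zetaSpan k r :=
  Submodule.subset_span (Or.inl (Or.inr rfl))

theorem dz_mem_zetaSpan {j l : ℕ} (hj : 2 ≤ j) (hjr : j ≤ r) (hk : j + l = k) :
    dz j l ∈ zetaSpan k r :=
  Submodule.subset_span (Or.inl (Or.inl ⟨j, hj, hjr, by rw [← hk, add_tsub_cancel_left]⟩))

theorem rz_mul_rz_mem_zetaSpan {j l : ℕ} (hj : 2 ≤ j) (hl : 2 ≤ l) (hk : j + l = k) :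
    rz j * rz l ∈ zetaSpan k r :=
  Submodule.subset_span (Or.inr ⟨j, hj, by omega, by rw [← hk, add_tsub_cancel_left]⟩)

theorem dz_add_dz_mem_zetaSpan {a b : ℕ} (ha : 2 ≤ a) (hb : 2 ≤ b) (hk : a + b = k) :
    dz a b + dz b a ∈ zetaSpan k r := by
  have hstuffle : dz a b + dz b a = rz a * rz b - rz k := by
    rw [← T_zero ha hb, T_zero_eq_dzStar_add_dz ha hb, dzStar_eq ha (by omega), hk]
    ring
  rw [hstuffle]
  exact sub_mem (rz_mul_rz_mem_zetaSpan ha hb hk) rz_mem_zetaSpan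

theorem sum_dz_mem_zetaSpan (n : ℕ) :
    ∑ i ∈ range n, dz (i + 2) (n - i + 1) ∈ zetaSpan (n + 3) r := by
  have hreflect :
      ∑ i ∈ range n, dz (n - i + 1) (i + 2) = ∑ i ∈ range n, dz (i + 2) (n - i + 1) := by
    rw [← sum_range_reflect]
    refine sum_congr rfl fun i hi => ?_
    have := mem_range.1 hi
    congr 1 <;> omega
  have hpairs : ∑ i ∈ range n, (dz (i + 2) (n - i + 1) + dz (n - i + 1) (i + 2)) ∈
      zetaSpan (n + 3) r :=
    sum_mem fun i hi => by
      have := mem_range.1 hi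
      exact dz_add_dz_mem_zetaSpan (by omega) (by omega) (by omega)
  rw [sum_add_distrib, hreflect, ← two_smul ℚ] at hpairs
  exact (Submodule.smul_mem_iff _ two_ne_zero).1 hpairs

theorem T_one_one_mem_zetaSpan (n : ℕ) : T 1 1 (n + 1) ∈ zetaSpan (n + 3) r := by
  have hrec := T_one_succ le_rfl n
  have hstar := T_one_one (p := n + 1) (by omega)
  rw [dzStar_eq (by omega) le_rfl] at hstar
  simp only [show ∀ i, 1 + i + 1 = i + 2 from fun i => by ring] at hrec
  have hdz : dz (n + 2) 1 = rz (n + 3) - ∑ i ∈ range n, dz (i + 2) (n - i + 1) := by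
    linarith
  rw [hstar, hdz]
  exact add_mem rz_mem_zetaSpan (sub_mem rz_mem_zetaSpan (sum_dz_mem_zetaSpan n))

theorem T_succ_succ_mem_zetaSpan :
    ∀ {c a b : ℕ}, c + 1 ≤ r → 1 ≤ b → c + a + b + 2 = k → T (c + 1) (a + 1) b ∈ zetaSpan k r
  | 0, 0, b, _, hb, hk => by
    obtain ⟨n, rfl⟩ : ∃ n, b = n + 1 := ⟨b - 1, by omega⟩
    obtain rfl : k = n + 3 := by omega
    exact T_one_one_mem_zetaSpan n
  | 0, a + 1, b, hr, hb, hk => by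
    rw [eq_sub_of_add_eq' (T_eq_add (by omega) (by omega)).symm, T_zero (by omega) (by omega)]
    exact sub_mem (rz_mul_rz_mem_zetaSpan (by omega) (by omega) (by omega))
      (T_succ_succ_mem_zetaSpan hr (by omega) (by omega))
  | c + 1, 0, b, hr, hb, hk => by
    rw [eq_sub_of_add_eq' (T_eq_add (by omega) (by omega)).symm, ← dz_eq_T]
    exact sub_mem (T_succ_succ_mem_zetaSpan (by omega) (by omega) (by omega))
      (dz_mem_zetaSpan (by omega) hr (by omega))
  | c + 1, a + 1, b, hr, hb, hk => by
    rw [eq_sub_of_add_eq' (T_eq_add (by omega) (by omega)).symm]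
    exact sub_mem (T_succ_succ_mem_zetaSpan (by omega) (by omega) (by omega))
      (T_succ_succ_mem_zetaSpan hr (by omega) (by omega))

end zetaSpan

end Tornheim

theorem tornheim_in_span_general (k r q p : ℕ)
    (hr : 1 ≤ r) (hq : 1 ≤ q) (hp : 1 ≤ p) (hsum : r + q + p = k) :
    T r q p ∈ Submodule.span ℚ
      ({x : ℝ | ∃ j, 2 ≤ j ∧ j ≤ r ∧ x = dz j (k - j)} ∪ {rz k} ∪
       {x : ℝ | ∃ j, 2 ≤ j ∧ j ≤ k - 2 ∧ x = rz j * rz (k - j)}) := by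
  obtain ⟨c, rfl⟩ : ∃ c, r = c + 1 := ⟨r - 1, by omega⟩
  obtain ⟨a, rfl⟩ : ∃ a, q = a + 1 := ⟨q - 1, by omega⟩
  exact Tornheim.T_succ_succ_mem_zetaSpan le_rfl hp (by omega)

theorem tornheim_in_span (k r q p : ℕ) (hk : Even k) (hk4 : 4 ≤ k)
    (hr : 1 ≤ r) (hq : 1 ≤ q) (hp : 1 ≤ p) (hsum : r + q + p = k) :
    T r q p ∈ Submodule.span ℚ
      ({x : ℝ | ∃ j, 2 ≤ j ∧ j ≤ r ∧ x = dz j (k - j)} ∪ {rz k} ∪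
       {x : ℝ | ∃ j, 2 ≤ j ∧ j ≤ k - 2 ∧ x = rz j * rz (k - j)}) :=
  tornheim_in_span_general k r q p hr hq hp hsum
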